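/- Let Q be a 2×2 matrix with rational entries, Q ≠ 0. Write Q = (p/q)·Q̃ where p/q is the GCD of the entries of Q in lowest terms (q ∈ ℕ, q > 0, gcd(p,q)=1) and Q̃ is an integer matrix whose entries have gcd 1. Then the subgroup L = { v ∈ ℤ² : Q·v ∈ ℤ² } has finite index in ℤ², and this index equals q² / gcd(q, |det Q̃|). -/

import Mathlib

open Matrix

/-- The subgroup of integer vectors `v` with `Q·v` integral. -/
def intLattice (Q : Matrix (Fin 2) (Fin 2) ℚ) : AddSubgroup (Fin 2 → ℤ) where
  carrier := {v | ∀ i, ∃ n : ℤ, Q.mulVec (fun j => (v j : ℚ)) i = n}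
  zero_mem' := by
    intro i
    exact ⟨0, by simp [Matrix.mulVec]⟩
  add_mem' := by
    intro u v hu hv i
    obtain ⟨m, hm⟩ := hu i
    obtain ⟨n, hn⟩ := hv i
    refine ⟨m + n, ?_⟩
    have h : (fun j => (((u + v) j : ℤ) : ℚ)) = (fun j => ((u j : ℤ) : ℚ)) + fun j => ((v j : ℤ) : ℚ) := by
      funext j; simp
    rw [h, Matrix.mulVec_add, Pi.add_apply, hm, hn]
    push_cast; ring
  neg_mem' := by
    intro v hv i
    obtain ⟨n, hn⟩ := hv i
    refine ⟨-n, ?_⟩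
    have h : (fun j => (((-v) j : ℤ) : ℚ)) = -fun j => ((v j : ℤ) : ℚ) := by
      funext j; simp
    rw [h, Matrix.mulVec_neg, Pi.neg_apply, hn]
    push_cast; ring

/-- Gcd of the entries of a 2×2 integer matrix. -/
def entriesGcd (M : Matrix (Fin 2) (Fin 2) ℤ) : ℕ :=
  Nat.gcd (Nat.gcd (M 0 0).natAbs (M 0 1).natAbs) (Nat.gcd (M 1 0).natAbs (M 1 1).natAbs)

/-! Since `p` and `q` are coprime, `v ∈ ℤ²` lies in the lattice iff `q ∣ Q̃ v`, so the lattice is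
the preimage of the kernel of `Q̃` acting on `(ℤ/q)²` and its index is `q² / #ker`. The kernel
count is multiplicative in `q` by the Chinese remainder theorem. Modulo a prime power some entry of
`Q̃` is a unit, because the entries are coprime; eliminating with it identifies the kernel with the
annihilator of `det Q̃` in `ℤ/q`, which has `gcd(q, det Q̃)` elements. -/

theorem ZMod.card_intCast_mul_eq_zero (n : ℕ) [NeZero n] (d : ℤ) :
    Nat.card {y : ZMod n // (d : ZMod n) * y = 0} = n.gcd d.natAbs := by
  have hker : ∀ y : ZMod n,
      (d : ZMod n) * y = 0 ↔ y ∈ (nsmulAddMonoidHom d.natAbs : ZMod n →+ ZMod n).ker := by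
    intro y
    obtain ⟨m, rfl | rfl⟩ := Int.eq_nat_or_neg d <;> simp [nsmul_eq_mul]
  rw [Nat.card_congr (Equiv.subtypeEquivRight hker), IsAddCyclic.card_nsmulAddMonoidHom_ker,
    Nat.card_zmod]

namespace Matrix

section Elimination

variable {R : Type*} [CommRing R]

theorem card_ker_submatrix_equiv {ι : Type*} [Fintype ι] (M : Matrix ι ι R) (σ τ : ι ≃ ι) :
    Nat.card {x : ι → R // M.submatrix σ τ *ᵥ x = 0} = Nat.card {x : ι → R // M *ᵥ x = 0} := by
  refine Nat.card_congr (Equiv.subtypeEquiv (τ.arrowCongr (Equiv.refl R)) fun x => ?_)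
  change _ ↔ M *ᵥ (x ∘ τ.symm) = 0
  rw [submatrix_mulVec_equiv]
  constructor
  · intro h
    simpa [Function.comp_assoc] using congrArg (· ∘ σ.symm) h
  · intro h
    simp [h]

theorem card_ker_eq_card_ann_det_of_isUnit_zero_zero (M : Matrix (Fin 2) (Fin 2) R)
    (h : IsUnit (M 0 0)) :
    Nat.card {x : Fin 2 → R // M *ᵥ x = 0} = Nat.card {y : R // M.det * y = 0} := by
  -- solving the first equation for `x 0` turns the second into `det M * x 1 = 0`
  obtain ⟨u, hu⟩ := h
  have hker : ∀ x : Fin 2 → R, M *ᵥ x = 0 ↔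
      M 0 0 * x 0 + M 0 1 * x 1 = 0 ∧ M 1 0 * x 0 + M 1 1 * x 1 = 0 := by
    intro x
    simp [mulVec_fin_two, funext_iff, Fin.forall_fin_two]
  have huu : (↑u⁻¹ : R) * M 0 0 = 1 := by rw [← hu, Units.inv_mul]
  rw [det_fin_two]
  refine Nat.card_congr
    { toFun := fun x => ⟨x.1 1, ?_⟩
      invFun := fun y => ⟨![-(↑u⁻¹ * M 0 1 * y.1), y.1], ?_⟩
      left_inv := ?_
      right_inv := fun y => rfl }
  · obtain ⟨h0, h1⟩ := (hker x.1).1 x.2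
    linear_combination M 0 0 * h1 - M 1 0 * h0
  · refine (hker _).2 ⟨?_, ?_⟩
    · simp only [cons_val_zero, cons_val_one]
      linear_combination (-(M 0 1 * y.1)) * huu
    · simp only [cons_val_zero, cons_val_one]
      linear_combination (↑u⁻¹ : R) * y.2 - M 1 1 * y.1 * huu
  · rintro ⟨x, hx⟩
    obtain ⟨h0, -⟩ := (hker x).1 hx
    ext i
    fin_cases i
    · simp only [Fin.zero_eta, Fin.isValue, cons_val_zero]
      linear_combination (-(↑u⁻¹ : R)) * h0 + x 0 * huu
    · rfl

theorem card_ker_eq_card_ann_det_of_isUnit (M : Matrix (Fin 2) (Fin 2) R) {i j : Fin 2}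
    (h : IsUnit (M i j)) :
    Nat.card {x : Fin 2 → R // M *ᵥ x = 0} = Nat.card {y : R // M.det * y = 0} := by
  set M' := M.submatrix (Equiv.swap 0 i) (Equiv.swap 0 j)
  have h' : IsUnit (M' 0 0) := by simpa [M'] using h
  have hdet : M'.det = (Equiv.Perm.sign (Equiv.swap 0 j) : ℤ) *
      ((Equiv.Perm.sign (Equiv.swap 0 i) : ℤ) * M.det) := by
    rw [← det_permute, ← det_permute']
    rfl
  rw [← card_ker_submatrix_equiv M (Equiv.swap 0 i) (Equiv.swap 0 j),
    card_ker_eq_card_ann_det_of_isUnit_zero_zero M' h', hdet]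
  refine Nat.card_congr (Equiv.subtypeEquivRight fun y => ?_)
  rcases Int.units_eq_one_or (Equiv.Perm.sign (Equiv.swap 0 i)) with hi | hi <;>
  rcases Int.units_eq_one_or (Equiv.Perm.sign (Equiv.swap 0 j)) with hj | hj <;>
  simp [hi, hj]

end Elimination

variable {ι : Type*} [Fintype ι]

def modKer (A : Matrix ι ι ℤ) (n : ℕ) : AddSubgroup (ι → ZMod n) :=
  (A.map (Int.cast : ℤ → ZMod n)).mulVecLin.toAddMonoidHom.ker

theorem mem_modKer {A : Matrix ι ι ℤ} {n : ℕ} {x : ι → ZMod n} :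
    x ∈ A.modKer n ↔ A.map (Int.cast : ℤ → ZMod n) *ᵥ x = 0 := Iff.rfl

theorem map_intCast_mulVec_comp {R S : Type*} [Ring R] [Ring S] (f : R →+* S)
    (A : Matrix ι ι ℤ) (x : ι → R) :
    f ∘ (A.map (Int.cast : ℤ → R) *ᵥ x) = A.map (Int.cast : ℤ → S) *ᵥ (f ∘ x) := by
  ext i
  rw [Function.comp_apply, RingHom.map_mulVec, map_map]
  congr 2
  ext
  simp

theorem map_intCast_mulVec_intCast {R : Type*} [Ring R] (A : Matrix ι ι ℤ) (v : ι → ℤ) :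
    A.map (Int.cast : ℤ → R) *ᵥ (fun j => (v j : R)) = fun i => ((A *ᵥ v) i : R) := by
  ext i
  exact (RingHom.map_mulVec (Int.castRingHom R) A v i).symm

theorem intCast_mem_modKer_iff {A : Matrix ι ι ℤ} {n : ℕ} {v : ι → ℤ} :
    (fun j => (v j : ZMod n)) ∈ A.modKer n ↔ ∀ i, (n : ℤ) ∣ (A *ᵥ v) i := by
  simp only [mem_modKer, map_intCast_mulVec_intCast, funext_iff, Pi.zero_apply,
    ZMod.intCast_zmod_eq_zero_iff_dvd]

theorem card_modKer_mul (A : Matrix ι ι ℤ) {m k : ℕ} (h : m.Coprime k) :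
    Nat.card (A.modKer (m * k)) = Nat.card (A.modKer m) * Nat.card (A.modKer k) := by
  set e := ZMod.chineseRemainder h
  have hker : ∀ x : ι → ZMod (m * k), x ∈ A.modKer (m * k) ↔
      (RingHom.fst _ _ ∘ e ∘ x ∈ A.modKer m ∧ RingHom.snd _ _ ∘ e ∘ x ∈ A.modKer k) := by
    intro x
    have he := map_intCast_mulVec_comp (e : ZMod (m * k) →+* ZMod m × ZMod k) A x
    rw [RingEquiv.coe_toRingHom] at he
    rw [mem_modKer, mem_modKer, mem_modKer, ← map_intCast_mulVec_comp, ← map_intCast_mulVec_comp, ← he]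
    simp only [funext_iff, Function.comp_apply, Pi.zero_apply, ← forall_and]
    refine forall_congr' fun i => ?_
    rw [RingHom.coe_fst, RingHom.coe_snd, ← Prod.mk_eq_zero, Prod.mk.eta, map_eq_zero_iff e e.injective]
  have E : A.modKer (m * k) ≃ A.modKer m × A.modKer k :=
    (Equiv.subtypeEquiv ((Equiv.piCongrRight fun _ => e.toEquiv).trans
      (Equiv.arrowProdEquivProdArrow _ _ _)) hker).trans Equiv.subtypeProdEquivProd
  rw [Nat.card_congr E, Nat.card_prod]

theorem card_modKer_eq_card_ann_det_of_isUnit (A : Matrix (Fin 2) (Fin 2) ℤ) {n : ℕ} {i j : Fin 2}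
    (h : IsUnit (A i j : ZMod n)) :
    Nat.card (A.modKer n) = Nat.card {y : ZMod n // (A.det : ZMod n) * y = 0} := by
  rw [Int.cast_det, ← card_ker_eq_card_ann_det_of_isUnit _ (i := i) (j := j) h]
  rfl

theorem card_modKer_prime_pow (A : Matrix (Fin 2) (Fin 2) ℤ) (hA : entriesGcd A = 1) {p : ℕ}
    (hp : p.Prime) (k : ℕ) : Nat.card (A.modKer (p ^ k)) = (p ^ k).gcd A.det.natAbs := by
  obtain ⟨i, j, hij⟩ : ∃ i j, ¬ p ∣ (A i j).natAbs := by
    by_contra! hdvd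
    refine hp.one_lt.ne' (Nat.dvd_one.mp ?_)
    rw [← hA]
    exact Nat.dvd_gcd (Nat.dvd_gcd (hdvd 0 0) (hdvd 0 1)) (Nat.dvd_gcd (hdvd 1 0) (hdvd 1 1))
  have hunit : IsUnit (A i j : ZMod (p ^ k)) := by
    obtain ⟨m, hm | hm⟩ := Int.eq_nat_or_neg (A i j) <;>
    · simp only [hm, Int.natAbs_neg, Int.natAbs_natCast, Int.cast_neg, Int.cast_natCast,
        IsUnit.neg_iff, ZMod.isUnit_iff_coprime] at hij ⊢
      exact ((hp.coprime_iff_not_dvd.mpr hij).pow_left k).symm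
  have : NeZero (p ^ k) := ⟨pow_ne_zero k hp.ne_zero⟩
  rw [card_modKer_eq_card_ann_det_of_isUnit A hunit, ZMod.card_intCast_mul_eq_zero]

theorem card_modKer_eq_gcd_det (A : Matrix (Fin 2) (Fin 2) ℤ) (hA : entriesGcd A = 1) {n : ℕ}
    (hn : n ≠ 0) : Nat.card (A.modKer n) = n.gcd A.det.natAbs := by
  induction n using Nat.recOnPosPrimePosCoprime with
  | prime_pow p k hp _ => exact card_modKer_prime_pow A hA hp k
  | zero => exact absurd rfl hn
  | one => rw [Nat.gcd_one_left]; exact Nat.card_of_subsingleton 0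
  | coprime a b _ _ hab iha ihb =>
    rw [card_modKer_mul A hab, iha (by omega), ihb (by omega), Nat.gcd_comm (a * b), hab.gcd_mul,
      Nat.gcd_comm _ a, Nat.gcd_comm _ b]

end Matrix

theorem exists_intCast_eq_div_mul_iff_dvd {p : ℤ} {q : ℕ} (hq : q ≠ 0)
    (hpq : p.natAbs.gcd q = 1) (w : ℤ) : (∃ n : ℤ, (p / q : ℚ) * w = n) ↔ (q : ℤ) ∣ w := by
  have hq0 : (q : ℚ) ≠ 0 := Nat.cast_ne_zero.mpr hq
  constructor
  · rintro ⟨n, hn⟩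
    have hpw : p * w = q * n := by
      field_simp at hn
      exact_mod_cast hn
    refine Int.dvd_of_dvd_mul_right_of_gcd_one ⟨n, hpw⟩ ?_
    simpa [Int.gcd, Nat.gcd_comm] using hpq
  · rintro ⟨c, rfl⟩
    exact ⟨p * c, by push_cast; field_simp⟩

theorem intLattice_eq_comap_modKer {Q : Matrix (Fin 2) (Fin 2) ℚ} {p : ℤ} {q : ℕ} (hq : q ≠ 0)
    (hpq : p.natAbs.gcd q = 1) {Qt : Matrix (Fin 2) (Fin 2) ℤ}
    (hfac : Q = ((p : ℚ) / (q : ℚ)) • Qt.map (Int.cast : ℤ → ℚ)) :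
    intLattice Q = (Qt.modKer q).comap ((Int.castAddHom (ZMod q)).compLeft (Fin 2)) := by
  ext v
  change (∀ i, ∃ n : ℤ, (Q *ᵥ fun j => (v j : ℚ)) i = n) ↔ (fun j => (v j : ZMod q)) ∈ Qt.modKer q
  rw [intCast_mem_modKer_iff]
  refine forall_congr' fun i => ?_
  rw [← exists_intCast_eq_div_mul_iff_dvd hq hpq, hfac, smul_mulVec, map_intCast_mulVec_intCast]
  rfl

theorem index_intLattice_general (Q : Matrix (Fin 2) (Fin 2) ℚ)
    (p : ℤ) (q : ℕ) (hq : 0 < q) (hpq : Nat.gcd p.natAbs q = 1)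
    (Qt : Matrix (Fin 2) (Fin 2) ℤ)
    (hfac : Q = ((p : ℚ) / (q : ℚ)) • Qt.map (Int.cast : ℤ → ℚ))
    (hprim : entriesGcd Qt = 1) :
    (intLattice Q).index ≠ 0 ∧
    (intLattice Q).index = q ^ 2 / Nat.gcd q Qt.det.natAbs := by
  have hcount : (intLattice Q).index * q.gcd Qt.det.natAbs = q ^ 2 := by
    rw [intLattice_eq_comap_modKer hq.ne' hpq hfac,
      AddSubgroup.index_comap_of_surjective _ ZMod.intCast_surjective.comp_left,
      ← card_modKer_eq_gcd_det Qt hprim hq.ne', AddSubgroup.index_mul_card, Nat.card_pi]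
    simp [sq]
  have hgcd : 0 < q.gcd Qt.det.natAbs := Nat.gcd_pos_of_pos_left _ hq
  refine ⟨fun h0 => ?_, (Nat.div_eq_of_eq_mul_left hgcd hcount.symm).symm⟩
  rw [h0, zero_mul] at hcount
  exact pow_ne_zero 2 hq.ne' hcount.symm

theorem index_intLattice (Q : Matrix (Fin 2) (Fin 2) ℚ) (hQ : Q ≠ 0)
    (p : ℤ) (q : ℕ) (hq : 0 < q) (hpq : Nat.gcd p.natAbs q = 1)
    (Qt : Matrix (Fin 2) (Fin 2) ℤ)
    (hfac : Q = ((p : ℚ) / (q : ℚ)) • Qt.map (Int.cast : ℤ → ℚ))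
    (hprim : entriesGcd Qt = 1) :
    (intLattice Q).index ≠ 0 ∧
    (intLattice Q).index = q ^ 2 / Nat.gcd q Qt.det.natAbs :=
  index_intLattice_general Q p q hq hpq Qt hfac hprim
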